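/- If ε-substitutions S and S' have the same domain and agree on all Skolem terms of rank ≤ r, and the closed formula φ contains only Skolem functions of rank ≤ r, then S ⊨ φ iff S' ⊨ φ. -/

import Mathlib

inductive ETerm : Type where
  | zero : ETerm
  | succ : ETerm → ETerm
  | skolem : ℕ → List ETerm → ETerm

def numeral : ℕ → ETerm
  | 0 => .zero
  | n + 1 => .succ (numeral n)

def toNum : ETerm → Option ℕ
  | .zero => some 0
  | .succ t => (toNum t).map (· + 1)
  | .skolem _ _ => none

/-- An ε-substitution: `S c ns = none` means the canonical term `c(ns)` is not in
the domain; `some none` means it gets the default value `?`; `some (some v)` means value `v`. -/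
abbrev EpsSubst := ℕ → List ℕ → Option (Option ℕ)

def eval (S : EpsSubst) : ETerm → ETerm
  | .zero => .zero
  | .succ t => .succ (eval S t)
  | .skolem c args =>
      let args' := args.attach.map fun a => eval S a.1
      match args'.mapM toNum with
      | some ns =>
          match S c ns with
          | some (some v) => numeral v
          | some none => .zero
          | none => .skolem c (ns.map numeral)
      | none => .skolem c args'
termination_by t => t
decreasing_by
  all_goals simp_wf
  all_goals exact Nat.lt_of_lt_of_le (List.sizeOf_lt_of_mem a.2) (by omega)

inductive EFormula : Type where
  | rel : ℕ → List ETerm → EFormula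
  | not : EFormula → EFormula
  | and : EFormula → EFormula → EFormula
  | or : EFormula → EFormula → EFormula

def EFormula.imp (φ ψ : EFormula) : EFormula := .or (.not φ) ψ

/-- `sat Rel S true φ` is `S ⊨ φ`; `sat Rel S false φ` is `S ⊨ ¬φ`. -/
def sat (Rel : ℕ → List ℕ → Bool) (S : EpsSubst) : Bool → EFormula → Prop
  | b, .rel r ts => ∃ ns : List ℕ, ts.map (eval S) = ns.map numeral ∧ Rel r ns = b
  | b, .not φ => sat Rel S (!b) φ
  | true, .and φ ψ => sat Rel S true φ ∧ sat Rel S true ψ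
  | false, .and φ ψ => sat Rel S false φ ∨ sat Rel S false ψ
  | true, .or φ ψ => sat Rel S true φ ∨ sat Rel S true ψ
  | false, .or φ ψ => sat Rel S false φ ∧ sat Rel S false ψ

def TotalSubst (S : EpsSubst) : Prop := ∀ c ns, (S c ns).isSome

def stdExt (S : EpsSubst) : EpsSubst := fun c ns => some ((S c ns).getD none)

def Extends (S S' : EpsSubst) : Prop := ∀ c ns v, S c ns = some v → S' c ns = some v

def Decides (Rel : ℕ → List ℕ → Bool) (S : EpsSubst) (φ : EFormula) : Prop :=
  sat Rel S true φ ∨ sat Rel S false φ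


/-- The rank of a term, given the ranks `rk` of the Skolem functions. -/
def termRank (rk : ℕ → ℕ) : ETerm → ℕ
  | .zero => 0
  | .succ t => termRank rk t
  | .skolem c args => max (rk c) ((args.attach.map fun a => termRank rk a.1).foldr max 0)
termination_by t => t
decreasing_by
  all_goals simp_wf
  all_goals exact Nat.lt_of_lt_of_le (List.sizeOf_lt_of_mem a.2) (by omega)

/-- The rank of a formula: the maximal rank of Skolem functions occurring in it. -/
def formRank (rk : ℕ → ℕ) : EFormula → ℕ
  | .rel _ ts => (ts.map (termRank rk)).foldr max 0
  | .not φ => formRank rk φ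
  | .and φ ψ => max (formRank rk φ) (formRank rk ψ)
  | .or φ ψ => max (formRank rk φ) (formRank rk ψ)

section Congruence

variable {r : ℕ} (rk : ℕ → ℕ)

theorem rk_le_termRank_skolem (c : ℕ) (args : List ETerm) :
    rk c ≤ termRank rk (.skolem c args) := by
  rw [termRank]
  exact le_max_left _ _

theorem termRank_le_termRank_skolem_of_mem {c : ℕ} {args : List ETerm} {a : ETerm}
    (ha : a ∈ args) : termRank rk a ≤ termRank rk (.skolem c args) := by
  rw [termRank]
  exact le_max_of_le_right (List.le_max_of_le' 0 (List.mem_map.2 ⟨⟨a, ha⟩, by simp⟩) le_rfl)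

theorem termRank_le_formRank_rel_of_mem {i : ℕ} {ts : List ETerm} {t : ETerm} (ht : t ∈ ts) :
    termRank rk t ≤ formRank rk (.rel i ts) :=
  List.le_max_of_le' 0 (List.mem_map_of_mem ht) le_rfl

variable {rk} {S S' : EpsSubst} (hagree : ∀ c ns, rk c ≤ r → S c ns = S' c ns)
include hagree

theorem eval_congr_of_termRank_le : ∀ t : ETerm, termRank rk t ≤ r → eval S t = eval S' t
  | .zero, _ => by rw [eval, eval]
  | .succ t, h => by
    rw [eval, eval, eval_congr_of_termRank_le t (by rwa [termRank] at h)]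
  | .skolem c args, h => by
    have hc : S c = S' c :=
      funext fun ns => hagree c ns ((rk_le_termRank_skolem rk c args).trans h)
    have hargs : (args.attach.map fun a => eval S a.1) = args.attach.map fun a => eval S' a.1 :=
      List.map_congr_left fun a _ => eval_congr_of_termRank_le a.1
        ((termRank_le_termRank_skolem_of_mem rk a.2).trans h)
    rw [eval, eval, hargs, hc]
termination_by t => t
decreasing_by
  all_goals simp_wf
  exact Nat.lt_of_lt_of_le (List.sizeOf_lt_of_mem a.2) (by omega)

theorem sat_congr_of_formRank_le (Rel : ℕ → List ℕ → Bool) (φ : EFormula)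
    (hφ : formRank rk φ ≤ r) (b : Bool) : sat Rel S b φ ↔ sat Rel S' b φ := by
  induction φ generalizing b with
  | rel i ts =>
    have hts : ts.map (eval S) = ts.map (eval S') :=
      List.map_congr_left fun t ht =>
        eval_congr_of_termRank_le hagree t ((termRank_le_formRank_rel_of_mem rk ht).trans hφ)
    simp only [sat, hts]
  | not φ ih => exact ih hφ !b
  | and φ ψ ihφ ihψ =>
    rw [formRank, max_le_iff] at hφ
    cases b <;> simp only [sat, ihφ hφ.1, ihψ hφ.2]
  | or φ ψ ihφ ihψ =>
    rw [formRank, max_le_iff] at hφ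
    cases b <;> simp only [sat, ihφ hφ.1, ihψ hφ.2]

end Congruence

theorem stmt9_general (Rel : ℕ → List ℕ → Bool) (rk : ℕ → ℕ) (S S' : EpsSubst)
    (hagree : ∀ c ns, rk c ≤ r → S c ns = S' c ns)
    (φ : EFormula) (hφ : formRank rk φ ≤ r) :
    sat Rel S true φ ↔ sat Rel S' true φ :=
  sat_congr_of_formRank_le hagree Rel φ hφ true

/-- If `S` and `S'` have the same domain and agree on all canonical Skolem
terms of rank ≤ r, and `φ` contains only Skolem functions of rank ≤ r, then
`S ⊨ φ` iff `S' ⊨ φ`. -/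
theorem stmt9 (Rel : ℕ → List ℕ → Bool) (rk : ℕ → ℕ) (S S' : EpsSubst)
    (hdom : ∀ c ns, (S c ns).isSome = (S' c ns).isSome)
    (hagree : ∀ c ns, rk c ≤ r → S c ns = S' c ns)
    (φ : EFormula) (hφ : formRank rk φ ≤ r) :
    sat Rel S true φ ↔ sat Rel S' true φ :=
  stmt9_general Rel rk S S' hagree φ hφ
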